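/- arXiv:2006.09321 — 4 statements merged into one kernel-verified Lean document; each statement's English description precedes it below -/
import Mathlib

section
/- For every n ≥ 1, the number of interval parking functions is |IPF_n| = n!·(n+1)^{n−1}; moreover, for each parking function a ∈ PF_n, the number of b ∈ [n]^n with (a,b) ∈ IPF_n is exactly n!. -/
/-- `o` is the outcome of running parking Algorithm A on preference vector `a`:
car `i` parks in the first unoccupied spot in `[a i, n]`, and every car parks. -/
def IsAOutcome {n : ℕ} (a o : Fin n → Fin n) : Prop :=
  Function.Injective o ∧ ∀ i, a i ≤ o i ∧
    ∀ s, a i ≤ s → s < o i → ∃ j, j < i ∧ o j = s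

/-- `a` is a parking function. -/
def IsParkingFunction {n : ℕ} (a : Fin n → Fin n) : Prop :=
  ∃ o, IsAOutcome a o

/-- `o` is the outcome of running parking Algorithm B on the pair `(a, b)`:
car `i` parks in the first unoccupied spot in `[a i, b i]`, and every car parks. -/
def IsBOutcome {n : ℕ} (a b o : Fin n → Fin n) : Prop :=
  Function.Injective o ∧ ∀ i, a i ≤ o i ∧ o i ≤ b i ∧
    ∀ s, a i ≤ s → s < o i → ∃ j, j < i ∧ o j = s

/-- `(a, b)` is an interval parking function. -/
def IsIPF {n : ℕ} (a b : Fin n → Fin n) : Prop :=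
  ∃ o, IsBOutcome a b o

/-- The conjugate (reverse complement) `x*` of `x`, with `x*(i) = n + 1 - x(n + 1 - i)`. -/
def pconj {n : ℕ} (f : Fin n → Fin n) : Fin n → Fin n :=
  fun i => (f i.rev).rev

/-- The pair `(x, y)` is reachable, `x ⊵_R y`: there is an IPF `(a, b)` with
`O(a) = x` and `O(b*) = y*`. -/
def Reaches {n : ℕ} (x y : Fin n → Fin n) : Prop :=
  ∃ a b : Fin n → Fin n, IsIPF a b ∧ IsAOutcome a x ∧ IsAOutcome (pconj b) (pconj y)

/-- Pseudoreachability `x ≥_P y`: the reflexive-transitive closure of reachability. -/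
def PseudoGE {n : ℕ} (x y : Equiv.Perm (Fin n)) : Prop :=
  Relation.ReflTransGen (fun u v : Equiv.Perm (Fin n) => Reaches ⇑u ⇑v) x y

/-- `#{k ∈ [i] : x(k) ≥ j}` (with `i`, `j` zero-indexed). -/
def bcount {n : ℕ} (x : Fin n → Fin n) (i j : Fin n) : ℕ :=
  (Finset.univ.filter (fun k : Fin n => k ≤ i ∧ j ≤ x k)).card

/-- The Bruhat order `x ≥_B y` on the symmetric group. -/
def BruhatGE {n : ℕ} (x y : Equiv.Perm (Fin n)) : Prop :=
  ∀ i j : Fin n, bcount ⇑y i j ≤ bcount ⇑x i j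

/-- The number of inversions (the Coxeter length) of `f`. -/
def invCount {n : ℕ} (f : Fin n → Fin n) : ℕ :=
  (Finset.univ.filter (fun p : Fin n × Fin n => p.1 < p.2 ∧ f p.2 < f p.1)).card

/-- The adjacent transposition `s_i` exchanging `i` and `i+1` (one-indexed),
as a permutation of `Fin n`. -/
def sgen (n : ℕ) (i : ℕ) : Equiv.Perm (Fin n) :=
  if h : 1 ≤ i ∧ i < n then Equiv.swap ⟨i - 1, by omega⟩ ⟨i, h.2⟩ else 1

/-- Left weak order: `x ≥_W y` iff `x = s_{i₁} ⋯ s_{i_k} · y` with `ℓ(x) = ℓ(y) + k`. -/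
def WeakGE {n : ℕ} (x y : Equiv.Perm (Fin n)) : Prop :=
  ∃ l : List ℕ, (∀ i ∈ l, 1 ≤ i ∧ i ≤ n - 1) ∧
    x = (l.map (sgen n)).prod * y ∧ invCount ⇑x = invCount ⇑y + l.length

/-- The projection `x ↦ x̂` deleting the last position and the value `x(n)`. -/
def hatf {n : ℕ} (x : Fin (n + 1) → Fin (n + 1)) : Fin n → Fin n :=
  fun i =>
    if h : (x i.castSucc).val < (x (Fin.last n)).val
    then ⟨(x i.castSucc).val, by have h1 := (x (Fin.last n)).isLt; omega⟩
    else ⟨(x i.castSucc).val - 1, by have h1 := (x i.castSucc).isLt; have h2 := i.isLt; omega⟩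

/-- `lam n f k` is `λ_k` of the permutation of `[n]` with one-line notation `f(1), …, f(n)`
(one-indexed): `λ_{n-1}(x) = n - x(n)` and `λ_k(x) = λ_k(x̄)` for `k ≤ n - 2`, where
`x̄ ∈ S_{n-1}` is the restriction of `u⁻¹·x` (`u = s_{x(n)} ⋯ s_{n-1}`), concretely
`x̄(i) = x(i)` if `x(i) < x(n)` and `x̄(i) = x(i) - 1` if `x(i) > x(n)`. -/
def lam : ℕ → (ℕ → ℕ) → ℕ → ℕ
  | 0, _, _ => 0
  | n + 1, f, k =>
    if k = n then (n + 1) - f (n + 1)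
    else lam n (fun i => if f i < f (n + 1) then f i else f i - 1) k

/-- The one-line notation of `x`, as a one-indexed function `ℕ → ℕ`. -/
def oneline {n : ℕ} (x : Fin n → Fin n) : ℕ → ℕ :=
  fun i => if h : i - 1 < n then (x ⟨i - 1, h⟩).val + 1 else 0

/-- `y` contains the pattern `σ`. -/
def ContainsPattern {n m : ℕ} (y : Equiv.Perm (Fin n)) (σ : Equiv.Perm (Fin m)) : Prop :=
  ∃ f : Fin m → Fin n, StrictMono f ∧ ∀ j k, y (f j) < y (f k) ↔ σ j < σ k

/-- `x` is an AR (Arndt–Riehl) permutation: `x⁻¹(i) ≤ i + 1` for all `i ∈ [n]`. -/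
def IsAR {n : ℕ} (x : Equiv.Perm (Fin n)) : Prop :=
  ∀ i : Fin n, (x.symm i).val ≤ i.val + 1


/-!
Pollak's circle argument. Park `n` cars on `n + 1` spots arranged in a circle: every car
parks and exactly one spot stays empty. Adding `c` to all preferences rotates the outcome by
`c`, so each spot is left empty by exactly `(n + 1) ^ (n - 1)` of the `(n + 1) ^ n`
preference vectors, and the preferences leaving the extra spot empty are exactly the parking
functions. Given a parking function `a` with outcome `o`, the pair `(a, b)` is an IPF iff
`o ≤ b` pointwise; since `o` is a permutation there are `∏ₖ (n - k) = n!` such `b`.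
-/

/-- Circular parking on `Fin m`: car `i` parks at `o i`, and every spot it passes on the way
from `g i`, i.e. `g i + e` with `e < o i - g i` (mod `m`), is taken by an earlier car. -/
def IsCircularOutcome {k m : ℕ} (g o : Fin k → Fin m) : Prop :=
  Function.Injective o ∧ ∀ i, ∀ e < o i - g i, ∃ j < i, o j = g i + e

theorem exists_notMem_range_of_card_lt {α β : Type*} [Fintype α] [Fintype β] (f : α → β)
    (h : Fintype.card α < Fintype.card β) : ∃ y, y ∉ Set.range f := by
  by_contra! hf
  exact (Fintype.card_le_of_surjective f fun y => hf y).not_gt h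

theorem existsUnique_notMem_range {α β : Type*} [Fintype α] [Fintype β] {f : α → β}
    (hf : Function.Injective f) (h : Fintype.card β = Fintype.card α + 1) :
    ∃! y, y ∉ Set.range f := by
  classical
  have hcompl : (Finset.univ.image f)ᶜ.card = 1 := by
    rw [Finset.card_compl, Finset.card_image_of_injective _ hf, h, Finset.card_univ]
    omega
  obtain ⟨y, hy⟩ := Finset.card_eq_one.mp hcompl
  simp only [Finset.eq_singleton_iff_unique_mem, Finset.mem_compl, Finset.mem_image,
    Finset.mem_univ, true_and] at hy
  exact ⟨y, hy.1, hy.2⟩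

namespace IsCircularOutcome

variable {k m : ℕ} [NeZero m] {g o : Fin k → Fin m}

theorem unique {o' : Fin k → Fin m} (h : IsCircularOutcome g o) (h' : IsCircularOutcome g o') :
    o = o' := by
  funext i
  induction i using WellFoundedLT.induction with
  | _ i ih =>
    by_contra hne
    wlog hlt : o i - g i < o' i - g i generalizing o o'
    · exact this h' h (fun j hj => (ih j hj).symm) (Ne.symm hne)
        (lt_of_le_of_ne (not_lt.mp hlt) fun heq => hne (sub_left_inj.mp heq).symm)
    obtain ⟨j, hji, hj⟩ := h'.2 i _ hlt
    rw [add_sub_cancel] at hj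
    exact hji.ne (h.1 ((ih j hji).trans hj))

theorem add_const (h : IsCircularOutcome g o) (c : Fin m) :
    IsCircularOutcome (fun i => g i + c) (fun i => o i + c) := by
  refine ⟨(add_left_injective c).comp h.1, fun i e he => ?_⟩
  rw [add_sub_add_right_eq_sub] at he
  obtain ⟨j, hji, hj⟩ := h.2 i e he
  exact ⟨j, hji, by simp only [hj, add_right_comm]⟩

end IsCircularOutcome

theorem IsCircularOutcome.snoc {k m : ℕ} [NeZero m] {g : Fin (k + 1) → Fin m}
    {o : Fin k → Fin m} (h : IsCircularOutcome (Fin.init g) o) {d : Fin m}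
    (hfree : g (Fin.last k) + d ∉ Set.range o)
    (hmin : ∀ e < d, g (Fin.last k) + e ∈ Set.range o) :
    IsCircularOutcome g (Fin.snoc o (g (Fin.last k) + d)) := by
  refine ⟨Fin.snoc_injective_iff.mpr ⟨h.1, hfree⟩, Fin.lastCases ?_ fun i => ?_⟩
  · intro e he
    rw [Fin.snoc_last, add_sub_cancel_left] at he
    obtain ⟨j, hj⟩ := hmin e he
    exact ⟨j.castSucc, Fin.castSucc_lt_last j, by rw [Fin.snoc_castSucc, hj]⟩
  · intro e he
    rw [Fin.snoc_castSucc] at he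
    obtain ⟨j, hji, hj⟩ := h.2 i e he
    exact ⟨j.castSucc, Fin.castSucc_lt_castSucc_iff.mpr hji, by rw [Fin.snoc_castSucc, hj]; rfl⟩

theorem exists_isCircularOutcome {m : ℕ} [NeZero m] :
    ∀ {k : ℕ} (g : Fin k → Fin m), k ≤ m → ∃ o, IsCircularOutcome g o
  | 0, g, _ => ⟨Fin.elim0, fun i => i.elim0, fun i => i.elim0⟩
  | k + 1, g, hk => by
    obtain ⟨o, ho⟩ := exists_isCircularOutcome (Fin.init g) (by omega)
    obtain ⟨x, hx⟩ := exists_notMem_range_of_card_lt o (by simp; omega)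
    obtain ⟨d, hd, hmin⟩ := wellFounded_lt.has_min {d | g (Fin.last k) + d ∉ Set.range o}
      ⟨x - g (Fin.last k), by simpa using hx⟩
    exact ⟨_, ho.snoc hd fun e he => not_not.mp fun hfree => hmin e hfree he⟩

theorem IsCircularOutcome.eq_of_notMem_range {n : ℕ} {g o o' : Fin n → Fin (n + 1)}
    (h : IsCircularOutcome g o) (h' : IsCircularOutcome g o') {x y : Fin (n + 1)}
    (hx : x ∉ Set.range o) (hy : y ∉ Set.range o') : x = y := by
  obtain rfl := h.unique h'
  exact (existsUnique_notMem_range h.1 (by simp)).unique hx hy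

theorem IsAOutcome.isCircularOutcome_castSucc {n : ℕ} {a o : Fin n → Fin n}
    (h : IsAOutcome a o) : IsCircularOutcome (Fin.castSucc ∘ a) (Fin.castSucc ∘ o) := by
  refine ⟨(Fin.castSucc_injective n).comp h.1, fun i e he => ?_⟩
  have hle := (h.2 i).1
  have hsub : ((o i).castSucc - (a i).castSucc).val = (o i).val - (a i).val :=
    Fin.coe_sub_iff_le.mpr (Fin.castSucc_le_castSucc_iff.mpr hle)
  have he' : e.val < (o i).val - (a i).val := hsub ▸ Fin.lt_def.mp he
  obtain ⟨j, hji, hj⟩ := (h.2 i).2 ⟨(a i).val + e.val, by omega⟩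
    (Fin.le_def.mpr (by simp)) (Fin.lt_def.mpr (by simp; omega))
  refine ⟨j, hji, Fin.ext ?_⟩
  simp only [Function.comp_apply, Fin.val_castSucc, Fin.val_add, hj]
  rw [Nat.mod_eq_of_lt (by omega)]

theorem IsCircularOutcome.le_of_ne_last {n k : ℕ} {g o : Fin k → Fin (n + 1)}
    (h : IsCircularOutcome g o) (hlast : ∀ i, o i ≠ Fin.last n) (i : Fin k) : g i ≤ o i := by
  by_contra! hwrap
  have hpass : Fin.last n - g i < o i - g i := by
    rw [Fin.lt_def, Fin.coe_sub_iff_le.mpr (Fin.le_last _), Fin.sub_def]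
    simp only [Fin.val_last]
    rw [Nat.mod_eq_of_lt (by omega)]
    omega
  obtain ⟨j, -, hj⟩ := h.2 i _ hpass
  exact hlast j (by rw [hj, add_sub_cancel])

theorem IsCircularOutcome.exists_isParkingFunction {n : ℕ} {g o : Fin n → Fin (n + 1)}
    (h : IsCircularOutcome g o) (hlast : ∀ i, o i ≠ Fin.last n) :
    ∃ a, Fin.castSucc ∘ a = g ∧ IsParkingFunction a := by
  have hg : ∀ i, ∃ x, Fin.castSucc x = g i := fun i =>
    Fin.exists_castSucc_eq.mpr ((h.le_of_ne_last hlast i).trans_lt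
      (Fin.lt_last_iff_ne_last.mpr (hlast i))).ne
  choose a ha using hg
  choose o' ho' using fun i => Fin.exists_castSucc_eq.mpr (hlast i)
  refine ⟨a, funext ha, o', fun i j hij => h.1 (by rw [← ho', ← ho', hij]), fun i => ⟨?_, ?_⟩⟩
  · rw [← Fin.castSucc_le_castSucc_iff, ha, ho']
    exact h.le_of_ne_last hlast i
  · intro s hs hso
    have hgo := h.le_of_ne_last hlast i
    obtain ⟨j, hji, hj⟩ := h.2 i (s.castSucc - g i) (by
      rw [← ha, ← ho'] at hgo ⊢
      rw [Fin.lt_def, Fin.coe_sub_iff_le.mpr (Fin.castSucc_le_castSucc_iff.mpr hs),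
        Fin.coe_sub_iff_le.mpr hgo]
      simp only [Fin.val_castSucc]
      have := Fin.le_def.mp hs; have := Fin.lt_def.mp hso
      omega)
    refine ⟨j, hji, Fin.castSucc_injective n ?_⟩
    rw [ho', hj, add_sub_cancel]

def LeavesLastSpotFree {n : ℕ} (g : Fin n → Fin (n + 1)) : Prop :=
  ∃ o, IsCircularOutcome g o ∧ ∀ i, o i ≠ Fin.last n

theorem card_parkingFunction_eq_card_leavesLastSpotFree (n : ℕ) :
    Nat.card {a : Fin n → Fin n // IsParkingFunction a} =
      Nat.card {g : Fin n → Fin (n + 1) // LeavesLastSpotFree g} := by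
  have hcirc (a : {a : Fin n → Fin n // IsParkingFunction a}) :
      LeavesLastSpotFree (Fin.castSucc ∘ a.1) := by
    obtain ⟨o, ho⟩ := a.2
    exact ⟨_, ho.isCircularOutcome_castSucc, fun i => Fin.castSucc_ne_last (o i)⟩
  refine Nat.card_eq_of_bijective (fun a => ⟨Fin.castSucc ∘ a.1, hcirc a⟩) ⟨fun a b hab =>
    Subtype.ext ((Fin.castSucc_injective n).comp_left (congrArg Subtype.val hab)), ?_⟩
  rintro ⟨g, o, ho, hlast⟩
  obtain ⟨a, rfl, hpf⟩ := ho.exists_isParkingFunction hlast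
  exact ⟨⟨a, hpf⟩, rfl⟩

theorem card_leavesLastSpotFree_mul (n : ℕ) :
    Nat.card {g : Fin n → Fin (n + 1) // LeavesLastSpotFree g} * (n + 1) = (n + 1) ^ n := by
  have hbij : Function.Bijective fun p : {g // LeavesLastSpotFree g} × Fin (n + 1) =>
      fun i => p.1.1 i + p.2 := by
    constructor
    · rintro ⟨⟨g, o, ho, hlast⟩, c⟩ ⟨⟨g', o', ho', hlast'⟩, c'⟩ hgg'
      change (fun i => g i + c) = fun i => g' i + c' at hgg'
      have hcc' : Fin.last n + c = Fin.last n + c' :=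
        (ho.add_const c).eq_of_notMem_range (hgg' ▸ ho'.add_const c')
          (fun ⟨i, hi⟩ => hlast i (add_right_cancel hi))
          (fun ⟨i, hi⟩ => hlast' i (add_right_cancel hi))
      obtain rfl := add_left_cancel hcc'
      exact Prod.ext (Subtype.ext (funext fun i => add_right_cancel (congrFun hgg' i))) rfl
    · intro h
      obtain ⟨o, ho⟩ := exists_isCircularOutcome h (by omega)
      obtain ⟨x, hx⟩ := exists_notMem_range_of_card_lt o (by simp)
      have hshift := ho.add_const (Fin.last n - x)
      refine ⟨⟨⟨_, _, hshift, fun i hi => hx ⟨i, ?_⟩⟩, x - Fin.last n⟩, funext fun i => ?_⟩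
      · rw [← sub_sub_cancel (Fin.last n) x]
        exact eq_sub_of_add_eq hi
      · simp only
        abel
  have hcard := Nat.card_eq_of_bijective _ hbij
  rw [Nat.card_prod, Nat.card_fun] at hcard
  simpa using hcard

theorem card_parkingFunction (n : ℕ) :
    Nat.card {a : Fin n → Fin n // IsParkingFunction a} = (n + 1) ^ (n - 1) := by
  apply Nat.eq_of_mul_eq_mul_right n.succ_pos
  rw [card_parkingFunction_eq_card_leavesLastSpotFree, card_leavesLastSpotFree_mul]
  cases n <;> simp [pow_succ]

theorem IsAOutcome.unique {n : ℕ} {a o o' : Fin n → Fin n} (h : IsAOutcome a o)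
    (h' : IsAOutcome a o') : o = o' :=
  (Fin.castSucc_injective n).comp_left
    (h.isCircularOutcome_castSucc.unique h'.isCircularOutcome_castSucc)

theorem IsBOutcome.isAOutcome {n : ℕ} {a b o : Fin n → Fin n} (h : IsBOutcome a b o) :
    IsAOutcome a o :=
  ⟨h.1, fun i => ⟨(h.2 i).1, (h.2 i).2.2⟩⟩

theorem IsIPF.isParkingFunction {n : ℕ} {a b : Fin n → Fin n} (h : IsIPF a b) :
    IsParkingFunction a :=
  h.imp fun _ => IsBOutcome.isAOutcome

theorem IsAOutcome.isIPF_iff {n : ℕ} {a o : Fin n → Fin n} (ho : IsAOutcome a o)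
    (b : Fin n → Fin n) : IsIPF a b ↔ o ≤ b := by
  constructor
  · rintro ⟨o', ho'⟩
    obtain rfl : o = o' := ho.unique ho'.isAOutcome
    exact fun i => (ho'.2 i).2.1
  · exact fun hb => ⟨o, ho.1, fun i => ⟨(ho.2 i).1, hb i, (ho.2 i).2⟩⟩

theorem card_isIPF {n : ℕ} {a : Fin n → Fin n} (ha : IsParkingFunction a) :
    Nat.card {b : Fin n → Fin n // IsIPF a b} = n.factorial := by
  obtain ⟨o, ho⟩ := ha
  have hbij : Function.Bijective o := Finite.injective_iff_bijective.mp ho.1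
  calc Nat.card {b : Fin n → Fin n // IsIPF a b}
      = (Finset.Ici o).card := by
        rw [← Nat.card_eq_finsetCard]
        exact Nat.card_congr (Equiv.subtypeEquivRight fun b => by
          rw [ho.isIPF_iff, Finset.mem_Ici])
    _ = ∏ i, (n - (o i).val) := by simp only [Pi.card_Ici, Fin.card_Ici]
    _ = ∏ k : Fin n, (n - k.val) := (Equiv.ofBijective o hbij).prod_comp fun k => n - k.val
    _ = n.factorial := by
      rw [Fin.prod_univ_eq_prod_range (fun k => n - k), ← Nat.descFactorial_eq_prod_range,
        Nat.descFactorial_self]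

theorem stmt1_general {n : ℕ} :
    Nat.card {p : (Fin n → Fin n) × (Fin n → Fin n) // IsIPF p.1 p.2} =
      n.factorial * (n + 1) ^ (n - 1) ∧
    ∀ a : Fin n → Fin n, IsParkingFunction a →
      Nat.card {b : Fin n → Fin n // IsIPF a b} = n.factorial := by
  classical
  refine ⟨?_, fun a ha => card_isIPF ha⟩
  have hfiber (a : Fin n → Fin n) : Nat.card {b : Fin n → Fin n // IsIPF a b} =
      if IsParkingFunction a then n.factorial else 0 := by
    split_ifs with ha
    · exact card_isIPF ha
    · have : IsEmpty {b // IsIPF a b} := ⟨fun b => ha b.2.isParkingFunction⟩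
      exact Nat.card_of_isEmpty
  rw [Nat.card_congr (Equiv.subtypeProdEquivSigmaSubtype IsIPF), Nat.card_sigma,
    Finset.sum_congr rfl fun a _ => hfiber a, Finset.sum_ite, Finset.sum_const_zero, add_zero,
    Finset.sum_const, smul_eq_mul, ← Fintype.card_subtype, ← Nat.card_eq_fintype_card,
    card_parkingFunction, mul_comm]

/-- `|IPF_n| = n! (n+1)^{n-1}`, and for each parking function `a`
there are exactly `n!` choices of `b` with `(a, b) ∈ IPF_n`. -/
theorem stmt1 {n : ℕ} (hn : 1 ≤ n) :
    Nat.card {p : (Fin n → Fin n) × (Fin n → Fin n) // IsIPF p.1 p.2} =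
      n.factorial * (n + 1) ^ (n - 1) ∧
    ∀ a : Fin n → Fin n, IsParkingFunction a →
      Nat.card {b : Fin n → Fin n // IsIPF a b} = n.factorial :=
  stmt1_general
end

section
/- If (a, b) is an interval parking function for n cars, then the conjugate b* is a parking function. -/
/-
Reversing the spots of the Algorithm B outcome `o` gives a permutation `o*` with `b* ≤ o*`
pointwise, so it suffices that every preference vector `c` dominated by a permutation `π` is a
parking function. Run Algorithm A on `c`; if car `i` found no free spot in `[c i, n]`, let `t` be
the last free spot, so `t < c i`. Each car parked above `t` prefers a spot above `t`, since it
passed over the free spot `t` otherwise; together with car `i` these are `n - t` cars all with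
`π > t`, too many for the `n - 1 - t` spots above `t`.
-/

/-- Cars `0, …, m - 1` have parked by Algorithm A on `c`, car `j` at spot `o j`. -/
def IsParkedUpTo {n : ℕ} (c o : Fin n → Fin n) (m : ℕ) : Prop :=
  (∀ j k : Fin n, j.val < m → k.val < m → o j = o k → j = k) ∧
    ∀ j : Fin n, j.val < m → c j ≤ o j ∧ ∀ s, c j ≤ s → s < o j → ∃ k, k < j ∧ o k = s

namespace IsParkedUpTo

variable {n m : ℕ} {c o : Fin n → Fin n}

lemma zero : IsParkedUpTo c o 0 :=
  ⟨fun _ _ hj => absurd hj (Nat.not_lt_zero _), fun _ hj => absurd hj (Nat.not_lt_zero _)⟩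

lemma isAOutcome (h : IsParkedUpTo c o n) : IsAOutcome c o :=
  ⟨fun j k hjk => h.1 j k j.isLt k.isLt hjk, fun j => h.2 j j.isLt⟩

/-- Car `m` parks in the first spot in `[c m, n]` not taken by the earlier cars. -/
lemma succ (h : IsParkedUpTo c o m) (hm : m < n)
    (hfree : ∃ s, c ⟨m, hm⟩ ≤ s ∧ ∀ j : Fin n, j.val < m → o j ≠ s) :
    ∃ o', IsParkedUpTo c o' (m + 1) := by
  classical
  set i : Fin n := ⟨m, hm⟩
  set F := Finset.univ.filter fun s => c i ≤ s ∧ ∀ j : Fin n, j.val < m → o j ≠ s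
  have hF : F.Nonempty :=
    let ⟨s, hs⟩ := hfree
    ⟨s, Finset.mem_filter.mpr ⟨Finset.mem_univ s, hs⟩⟩
  set p := F.min' hF
  obtain ⟨hcp, hp_free⟩ : c i ≤ p ∧ ∀ j : Fin n, j.val < m → o j ≠ p :=
    (Finset.mem_filter.mp (F.min'_mem hF)).2
  have upd_old : ∀ j : Fin n, j.val < m → Function.update o i p j = o j := fun j hj =>
    Function.update_of_ne (fun hji => by simp [hji, i] at hj) _ _
  have upd_new : ∀ j : Fin n, j.val = m → Function.update o i p j = p := fun j hj => by
    rw [show j = i from Fin.ext hj, Function.update_self]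
  refine ⟨Function.update o i p, ?_, ?_⟩
  · intro j k hj hk hjk
    rcases Nat.lt_succ_iff_lt_or_eq.mp hj with hj | hj <;>
      rcases Nat.lt_succ_iff_lt_or_eq.mp hk with hk | hk
    · exact h.1 j k hj hk (by rwa [upd_old j hj, upd_old k hk] at hjk)
    · exact (hp_free j hj (by rwa [upd_old j hj, upd_new k hk] at hjk)).elim
    · exact (hp_free k hk (by rwa [upd_new j hj, upd_old k hk, eq_comm] at hjk)).elim
    · exact Fin.ext (hj.trans hk.symm)
  intro j hj
  rcases Nat.lt_succ_iff_lt_or_eq.mp hj with hj | hj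
  · obtain ⟨hco, hskip⟩ := h.2 j hj
    rw [upd_old j hj]
    refine ⟨hco, fun s hcs hso => ?_⟩
    obtain ⟨k, hkj, hks⟩ := hskip s hcs hso
    exact ⟨k, hkj, by rwa [upd_old k (lt_trans hkj hj)]⟩
  · rw [upd_new j hj, show j = i from Fin.ext hj]
    refine ⟨hcp, fun s hcs hsp => ?_⟩
    have hsF : s ∉ F := fun hsF => (F.min'_le s hsF).not_gt hsp
    obtain ⟨k, hk, hks⟩ : ∃ k : Fin n, k.val < m ∧ o k = s := by
      simpa [F, hcs] using hsF
    exact ⟨k, hk, by rwa [upd_old k hk]⟩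

lemma exists_free_ge {π : Fin n → Fin n} (hπ : Function.Injective π) (hcπ : ∀ i, c i ≤ π i)
    (h : IsParkedUpTo c o m) (hm : m < n) :
    ∃ s, c ⟨m, hm⟩ ≤ s ∧ ∀ j : Fin n, j.val < m → o j ≠ s := by
  classical
  by_contra! hocc
  set i : Fin n := ⟨m, hm⟩
  set T := (Finset.Iio i).image o
  have hT : ∀ u, u ∈ T ↔ ∃ j : Fin n, j.val < m ∧ o j = u := by
    simp [T, Fin.lt_def, i]
  have hT_card : T.card < n := by
    calc T.card ≤ (Finset.Iio i).card := Finset.card_image_le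
      _ < n := by rw [Fin.card_Iio]; exact hm
  have hT_compl : Tᶜ.Nonempty :=
    Finset.card_pos.mp (by rw [Finset.card_compl, Fintype.card_fin]; omega)
  obtain ⟨t, ht_free, ht_max⟩ : ∃ t ∈ Tᶜ, ∀ u ∈ Tᶜ, u ≤ t := Tᶜ.exists_max_image id hT_compl
  rw [Finset.mem_compl] at ht_free
  have htc : t < c i := lt_of_not_ge fun hct => ht_free ((hT t).mpr (hocc t hct))
  set S := Finset.univ.filter fun j : Fin n => j.val < m ∧ t < o j
  have hS_card : n - 1 - t ≤ S.card := by
    have hIoi : Finset.Ioi t ⊆ S.image o := fun u hu => by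
      rw [Finset.mem_Ioi] at hu
      have huT : u ∈ T := by_contra fun huT => (ht_max u (Finset.mem_compl.mpr huT)).not_gt hu
      obtain ⟨j, hj, rfl⟩ := (hT u).mp huT
      exact Finset.mem_image_of_mem o (by simp [S, hj, hu])
    calc n - 1 - t = (Finset.Ioi t).card := (Fin.card_Ioi t).symm
      _ ≤ (S.image o).card := Finset.card_le_card hIoi
      _ ≤ S.card := Finset.card_image_le
  have hS_pref : ∀ j ∈ S, t < c j := fun j hj => by
    simp only [S, Finset.mem_filter, Finset.mem_univ, true_and] at hj
    by_contra! hct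
    obtain ⟨k, hkj, hkt⟩ := (h.2 j hj.1).2 t hct hj.2
    exact ht_free ((hT t).mpr ⟨k, lt_trans hkj hj.1, hkt⟩)
  have hiS : i ∉ S := by simp [S, i]
  have himage : (insert i S).image π ⊆ Finset.Ioi t := by
    simp only [Finset.image_subset_iff, Finset.mem_insert, Finset.mem_Ioi, forall_eq_or_imp]
    exact ⟨htc.trans_le (hcπ i), fun j hj => (hS_pref j hj).trans_le (hcπ j)⟩
  have hcard := Finset.card_le_card himage
  rw [Finset.card_image_of_injective _ hπ, Finset.card_insert_of_notMem hiS, Fin.card_Ioi] at hcard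
  omega

end IsParkedUpTo

theorem isParkingFunction_of_le_of_injective {n : ℕ} {c π : Fin n → Fin n}
    (hπ : Function.Injective π) (hcπ : ∀ i, c i ≤ π i) : IsParkingFunction c := by
  have parked : ∀ m ≤ n, ∃ o, IsParkedUpTo c o m := by
    intro m
    induction m with
    | zero => exact fun _ => ⟨c, IsParkedUpTo.zero⟩
    | succ m ih =>
      intro hm
      obtain ⟨o, ho⟩ := ih (Nat.le_of_succ_le hm)
      exact ho.succ hm (ho.exists_free_ge hπ hcπ hm)
  obtain ⟨o, ho⟩ := parked n le_rfl
  exact ⟨o, ho.isAOutcome⟩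

lemma pconj_injective {n : ℕ} {f : Fin n → Fin n} (hf : Function.Injective f) :
    Function.Injective (pconj f) :=
  fun _ _ h => Fin.rev_injective (hf (Fin.rev_injective h))

lemma pconj_le_pconj {n : ℕ} {f g : Fin n → Fin n} (hfg : ∀ i, f i ≤ g i) (i : Fin n) :
    pconj g i ≤ pconj f i :=
  Fin.rev_le_rev.mpr (hfg i.rev)

/-- Prop. `lots-of-facts`(1). If `(a, b)` is an IPF then
the conjugate `b*` is a parking function. -/
theorem stmt2 {n : ℕ} (a b : Fin n → Fin n) (h : IsIPF a b) :
    IsParkingFunction (pconj b) := by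
  obtain ⟨o, ho_inj, ho⟩ := h
  exact isParkingFunction_of_le_of_injective (pconj_injective ho_inj)
    (pconj_le_pconj fun i => (ho i).2.1)
end

section
/- Reachability Criterion: for permutations x, y of [n], x ⊵_R y if and only if for every i ∈ [n] the integer interval [y(i), x(i)] is contained in the set y[i,n] = {y(i), y(i+1), …, y(n)}. -/
/-! Read in conjugate coordinates, `O(b*) = y*` says that car `i` ends at `y i` with
every spot of `(y i, b i]` taken by a later car. An IPF run that parks all cars is a run of
Algorithm A, so its outcome is `O(a) = x`, whence `x ≤ b` and every spot of `(y i, x i]` is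
some `y k` with `k > i`. Conversely `a = x`, `b = x ⊔ y` witnesses every pair satisfying
the criterion. -/

namespace IsAOutcome

variable {n : ℕ} {a o : Fin n → Fin n}

theorem unique_s6 {o' : Fin n → Fin n} (ho : IsAOutcome a o) (ho' : IsAOutcome a o') :
    o = o' := by
  funext i
  induction i using WellFoundedLT.induction with
  | ind i ih =>
    by_contra hne
    rcases lt_or_gt_of_ne hne with h | h
    · obtain ⟨j, hj, hj'⟩ := (ho'.2 i).2 (o i) (ho.2 i).1 h
      exact hj.ne (ho.1 ((ih j hj).trans hj'))
    · obtain ⟨j, hj, hj'⟩ := (ho.2 i).2 (o' i) (ho'.2 i).1 h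
      exact hj.ne (ho'.1 ((ih j hj).symm.trans hj'))

theorem of_isBOutcome {b : Fin n → Fin n} (h : IsBOutcome a b o) : IsAOutcome a o :=
  ⟨h.1, fun i => ⟨(h.2 i).1, (h.2 i).2.2⟩⟩

theorem isBOutcome {b : Fin n → Fin n} (h : IsAOutcome a o) (hb : ∀ i, o i ≤ b i) :
    IsBOutcome a b o :=
  ⟨h.1, fun i => ⟨(h.2 i).1, hb i, (h.2 i).2⟩⟩

theorem self (ho : Function.Injective o) : IsAOutcome o o :=
  ⟨ho, fun _ => ⟨le_rfl, fun _ hs hs' => absurd hs hs'.not_ge⟩⟩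

end IsAOutcome

theorem isAOutcome_pconj_iff {n : ℕ} {b y : Fin n → Fin n} :
    IsAOutcome (pconj b) (pconj y) ↔ Function.Injective y ∧
      ∀ i, y i ≤ b i ∧ ∀ s, y i < s → s ≤ b i → ∃ j, i < j ∧ y j = s := by
  have hinj : Function.Injective (pconj y) ↔ Function.Injective y := by
    change Function.Injective (Fin.rev ∘ y ∘ Fin.rev) ↔ _
    rw [Function.Injective.of_comp_iff Fin.rev_injective,
      Function.Injective.of_comp_iff' _ Fin.rev_bijective]
  unfold IsAOutcome
  rw [hinj, Fin.rev_surjective.forall]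
  simp only [pconj, Fin.rev_rev, Fin.rev_le_rev]
  refine and_congr_right fun _ => forall_congr' fun i => and_congr_right fun _ => ?_
  rw [Fin.rev_surjective.forall]
  refine forall_congr' fun s => ?_
  rw [Imp.swap, Fin.rev_lt_rev, Fin.rev_le_rev, Fin.rev_surjective.exists]
  simp only [Fin.rev_rev, Fin.rev_lt_rev, Fin.rev_inj]

/-- Theorem `thm:RC`, the Reachability Criterion.
`x ⊵_R y` iff for every `i ∈ [n]`, `[y(i), x(i)] ⊆ y[i, n]`. -/
theorem stmt6 {n : ℕ} (x y : Equiv.Perm (Fin n)) :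
    Reaches ⇑x ⇑y ↔
      ∀ i m : Fin n, y i ≤ m → m ≤ x i → ∃ k : Fin n, i ≤ k ∧ y k = m := by
  constructor
  · rintro ⟨a, b, ⟨o, ho⟩, hx, hy⟩ i m hym hmx
    have hxb : x i ≤ b i := (IsAOutcome.of_isBOutcome ho).unique_s6 hx ▸ (ho.2 i).2.1
    rcases hym.eq_or_lt with rfl | hym
    · exact ⟨i, le_rfl, rfl⟩
    · obtain ⟨k, hik, hyk⟩ := ((isAOutcome_pconj_iff.1 hy).2 i).2 m hym (hmx.trans hxb)
      exact ⟨k, hik.le, hyk⟩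
  · intro hcrit
    have hx : IsAOutcome x x := IsAOutcome.self x.injective
    refine ⟨x, x ⊔ y, ⟨x, hx.isBOutcome fun i => le_sup_left⟩, hx,
      isAOutcome_pconj_iff.2 ⟨y.injective, fun i => ⟨le_sup_right, fun s hys hsb => ?_⟩⟩⟩
    have hsx : s ≤ x i := (le_sup_iff.1 hsb).resolve_right hys.not_ge
    obtain ⟨k, hik, hyk⟩ := hcrit i s hys.le hsx
    exact ⟨k, hik.lt_of_ne (by rintro rfl; exact hys.ne hyk), hyk⟩
end

section
/- Let x, y be permutations of [n] with x ⊵_R y, and let m = ℓ(x) − ℓ(y). Then there exist permutations x_0 = y, x_1, …, x_m = x such that x_k ⊵_R x_{k−1} and ℓ(x_k) = ℓ(y) + k for all k ∈ [m]. -/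
/-!
Conjugating by the reversal `i ↦ n + 1 - i` turns `x ⊵_R y` into a condition on `p = x*` and
`q = y*` alone: under `q`, every spot in `[p i, q i)` is taken by a car arriving before car `i`.
If `p ≠ q`, pick `j` with `q j < p j`. A counting argument gives a later position with a larger
`q`-value; among those let `k` carry the least one. Then `r = q ∘ (j k)` satisfies the condition
for `(p, r)` and for `(r, q)`, and no position strictly between `j` and `k` carries a value between
`q j` and `q k`, so `ℓ(r) = ℓ(q) + 1`. Since lengths are bounded, iterating this yields the chain.
-/

namespace Parking

open Equiv Finset

theorem exists_graded_chain {α : Type*} {R : α → α → Prop} (ℓ : α → ℕ) {B : ℕ}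
    (hB : ∀ a, ℓ a ≤ B) (hcover : ∀ a b, R a b → a ≠ b → ∃ c, R a c ∧ R c b ∧ ℓ c = ℓ b + 1)
    {a b : α} (h : R a b) :
    ℓ b ≤ ℓ a ∧ ∃ f : ℕ → α, f 0 = b ∧ f (ℓ a - ℓ b) = a ∧
      ∀ k, 1 ≤ k → k ≤ ℓ a - ℓ b → R (f k) (f (k - 1)) ∧ ℓ (f k) = ℓ b + k := by
  by_cases hab : a = b
  · subst hab
    exact ⟨le_rfl, fun _ => a, rfl, rfl, fun k hk hk' => by omega⟩
  obtain ⟨c, hac, hcb, hc⟩ := hcover a b h hab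
  obtain ⟨hca, f, hf0, hfa, hf⟩ := exists_graded_chain ℓ hB hcover hac
  refine ⟨by omega, fun k => if k = 0 then b else f (k - 1), rfl, ?_, fun k hk hka => ?_⟩
  · dsimp only
    rw [if_neg (by omega), show ℓ a - ℓ b - 1 = ℓ a - ℓ c by omega, hfa]
  · simp only [if_neg (show k ≠ 0 by omega)]
    obtain rfl | hk := hk.eq_or_lt
    · simpa [hf0, hc] using hcb
    · obtain ⟨hR, hℓ⟩ := hf (k - 1) (by omega) (by omega)
      rw [if_neg (show k - 1 ≠ 0 by omega)]
      exact ⟨hR, by omega⟩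
termination_by B - ℓ b
decreasing_by
  have := hB c
  omega

variable {n : ℕ}

theorem IsBOutcome.isAOutcome {a b o : Fin n → Fin n} (h : IsBOutcome a b o) : IsAOutcome a o :=
  ⟨h.1, fun i => ⟨(h.2 i).1, (h.2 i).2.2⟩⟩

theorem IsAOutcome.unique {a o o' : Fin n → Fin n} (h : IsAOutcome a o) (h' : IsAOutcome a o') :
    o = o' := by
  funext i
  induction i using WellFoundedLT.induction with
  | _ i IH =>
  rcases lt_trichotomy (o i) (o' i) with hlt | heq | hlt
  · obtain ⟨j, hji, hj⟩ := (h'.2 i).2 _ (h.2 i).1 hlt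
    exact absurd (h.1 ((IH j hji).trans hj)) hji.ne
  · exact heq
  · obtain ⟨j, hji, hj⟩ := (h.2 i).2 _ (h'.2 i).1 hlt
    exact absurd (h'.1 ((IH j hji).symm.trans hj)) hji.ne

theorem isAOutcome_self {o : Fin n → Fin n} (ho : Function.Injective o) : IsAOutcome o o :=
  ⟨ho, fun _ => ⟨le_rfl, fun _ hs hs' => absurd (hs.trans_lt hs') (lt_irrefl _)⟩⟩

theorem pconj_pconj (f : Fin n → Fin n) : pconj (pconj f) = f := by
  funext i
  simp [pconj]

theorem invCount_pconj (f : Fin n → Fin n) : invCount (pconj f) = invCount f := by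
  unfold invCount
  refine card_bij' (fun p _ => (p.2.rev, p.1.rev)) (fun p _ => (p.2.rev, p.1.rev)) ?_ ?_ ?_ ?_ <;>
    simp [pconj]

theorem invCount_le (f : Fin n → Fin n) : invCount f ≤ n * n :=
  (card_filter_le _ _).trans (by simp)

def revConj (x : Perm (Fin n)) : Perm (Fin n) :=
  Fin.revPerm * x * Fin.revPerm

@[simp]
theorem coe_revConj (x : Perm (Fin n)) : ⇑(revConj x) = pconj ⇑x :=
  rfl

theorem revConj_involutive : Function.Involutive (revConj (n := n)) := fun _ =>
  DFunLike.coe_injective (pconj_pconj _)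

theorem Perm.exists_lt_of_ne {p q : Perm (Fin n)} (hne : p ≠ q) : ∃ j, q j < p j := by
  by_contra! h
  refine hne (Perm.ext fun i => ?_)
  have hsum : ∑ i, (p i : ℕ) = ∑ i, (q i : ℕ) := by
    rw [Equiv.sum_comp p (fun i => (i : ℕ)), Equiv.sum_comp q (fun i => (i : ℕ))]
  exact Fin.ext <|
    (sum_eq_sum_iff_of_le (f := fun i => (p i : ℕ)) fun i _ => h i).1 hsum i (mem_univ i)

/-- `q = O(min p q)`. In these terms `x ⊵_R y` reads `OccupiedBefore x* y*`. -/
def OccupiedBefore (p q : Perm (Fin n)) : Prop :=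
  ∀ i t, p i ≤ t → t < q i → q.symm t < i

theorem reaches_iff_occupiedBefore (x y : Perm (Fin n)) :
    Reaches ⇑x ⇑y ↔ OccupiedBefore (revConj x) (revConj y) := by
  constructor
  · rintro ⟨a, b, ⟨o, hB⟩, hAx, hAy⟩ i t hxt hty
    obtain rfl : o = ⇑x := IsAOutcome.unique (IsBOutcome.isAOutcome hB) hAx
    have hbx : pconj b i ≤ revConj x i := Fin.rev_le_rev.2 (hB.2 i.rev).2.1
    obtain ⟨j, hji, rfl⟩ := (hAy.2 i).2 t (hbx.trans hxt) hty
    simpa [← coe_revConj] using hji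
  · intro h
    refine ⟨x, pconj fun i => min (revConj x i) (revConj y i), ⟨x, x.injective, fun i =>
      ⟨le_rfl, ?_, (isAOutcome_self x.injective).2 i |>.2⟩⟩, isAOutcome_self x.injective, ?_⟩
    · simpa [pconj] using Fin.rev_le_rev.2 (min_le_left (revConj x i.rev) (revConj y i.rev))
    · rw [pconj_pconj, ← coe_revConj]
      refine ⟨(revConj y).injective, fun i => ⟨min_le_right _ _, fun s hs hsy => ?_⟩⟩
      exact ⟨_, h i s ((min_le_iff.1 hs).resolve_right (not_le.2 hsy)) hsy, apply_symm_apply _ _⟩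

section Cover

variable {p q : Perm (Fin n)} {j k : Fin n}

theorem OccupiedBefore.exists_lt_lt (h : OccupiedBefore p q) (hj : q j < p j) :
    ∃ i, j < i ∧ q j < q i := by
  by_contra! hno
  -- otherwise `q⁻¹ ∘ p` would inject `insert j S` into `S`
  set S := univ.filter fun i => q j < q i
  have hmaps : ∀ i ∈ insert j S, q.symm (p i) ∈ S := by
    intro i hi
    simp only [S, mem_insert, mem_filter, mem_univ, true_and, apply_symm_apply] at hi ⊢
    rcases hi with rfl | hi
    · exact hj
    · by_contra! hpi
      have hji := h i (q j) hpi hi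
      rw [symm_apply_apply] at hji
      exact (hno i hji).not_gt hi
  have hcard := card_le_card_of_injOn _ hmaps (fun a _ b _ hab => by simpa using hab)
  rw [card_insert_of_notMem (by simp [S])] at hcard
  omega

theorem symm_lt_of_lt_of_lt (hmin : ∀ i, j < i → q j < q i → q k ≤ q i) {t : Fin n}
    (h1 : q j < t) (h2 : t < q k) : q.symm t < j := by
  by_contra! hle
  obtain heq | hlt := hle.eq_or_lt
  · rw [heq, apply_symm_apply] at h1
    exact lt_irrefl _ h1
  · exact (hmin _ hlt (by simpa using h1)).not_gt (by simpa using h2)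

theorem occupiedBefore_mul_swap_left (hjk : j < k) (hk : q j < q k)
    (hmin : ∀ i, j < i → q j < q i → q k ≤ q i) : OccupiedBefore (q * swap j k) q := by
  intro i t h1 h2
  rw [Perm.mul_apply] at h1
  obtain rfl | hij := eq_or_ne i j
  · rw [swap_apply_left] at h1
    exact absurd (h1.trans_lt h2) hk.not_gt
  obtain rfl | hik := eq_or_ne i k
  · rw [swap_apply_right] at h1
    obtain rfl | h1 := h1.eq_or_lt
    · simpa using hjk
    · exact (symm_lt_of_lt_of_lt hmin h1 h2).trans hjk
  · rw [swap_apply_of_ne_of_ne hij hik] at h1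
    exact absurd (h1.trans_lt h2) (lt_irrefl _)

theorem OccupiedBefore.mul_swap_right (h : OccupiedBefore p q) (hj : q j < p j) (hjk : j < k)
    (hk : q j < q k) (hmin : ∀ i, j < i → q j < q i → q k ≤ q i) :
    OccupiedBefore p (q * swap j k) := by
  intro i t h1 h2
  obtain ⟨s, rfl⟩ := q.surjective t
  rw [(q * swap j k).symm_apply_eq.2
    (show q s = (q * swap j k) (swap j k s) by simp [Perm.mul_apply])]
  rw [Perm.mul_apply] at h2
  obtain rfl | hij := eq_or_ne i j
  · rw [swap_apply_left] at h2
    have hsi : s < i := by simpa using symm_lt_of_lt_of_lt hmin (hj.trans_le h1) h2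
    rwa [swap_apply_of_ne_of_ne hsi.ne (hsi.trans hjk).ne]
  obtain rfl | hik := eq_or_ne i k
  · rw [swap_apply_right] at h2
    have hsi : s < i := by simpa using h i _ h1 (h2.trans hk)
    have hsj : s ≠ j := by
      rintro rfl
      exact lt_irrefl _ h2
    rwa [swap_apply_of_ne_of_ne hsj hsi.ne]
  rw [swap_apply_of_ne_of_ne hij hik] at h2
  have hsi : s < i := by simpa using h i _ h1 h2
  obtain rfl | hsj := eq_or_ne s j
  · have hki : q k < q i := (hmin i hsi h2).lt_of_ne (q.injective.ne hik.symm)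
    simpa using h i (q k) (h1.trans hk.le) hki
  obtain rfl | hsk := eq_or_ne s k
  · rw [swap_apply_right]
    exact hjk.trans hsi
  · rwa [swap_apply_of_ne_of_ne hsj hsk]

/-- The bijection `F` moves an inversion `(a, b)` of `q * swap j k` other than `(j, k)` to
`(swap j k a, swap j k b)` when that pair is still increasing, and leaves it in place otherwise. -/
theorem invCount_mul_swap (hjk : j < k) (hk : q j < q k)
    (hgap : ∀ i, j < i → i < k → q j < q i → q k < q i) :
    invCount ⇑(q * swap j k) = invCount ⇑q + 1 := by
  unfold invCount
  rw [← card_erase_add_one (a := (j, k)) (mem_filter.2 ⟨mem_univ _, hjk, by simpa using hk⟩)]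
  congr 1
  let F : Fin n × Fin n → Fin n × Fin n := fun a =>
    if swap j k a.1 < swap j k a.2 then (swap j k a.1, swap j k a.2) else a
  have hq := q.injective
  refine card_bij' (fun a _ => F a) (fun a _ => F a) ?_ ?_ ?_ ?_ <;>
  · rintro ⟨a, b⟩
    simp only [mem_filter, mem_erase, mem_univ, true_and, ne_eq, Prod.mk.injEq, F, Perm.mul_apply]
    intro h
    split_ifs at h ⊢ <;> (try simp only [swap_apply_self] at *) <;> grind

theorem OccupiedBefore.exists_cover (h : OccupiedBefore p q) (hne : p ≠ q) :
    ∃ r, OccupiedBefore p r ∧ OccupiedBefore r q ∧ invCount ⇑r = invCount ⇑q + 1 := by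
  obtain ⟨j, hj⟩ := Perm.exists_lt_of_ne hne
  obtain ⟨k, hk, hmin⟩ := exists_min_image (univ.filter fun i => j < i ∧ q j < q i) q
    (by simpa [Finset.Nonempty] using h.exists_lt_lt hj)
  simp only [mem_filter, mem_univ, true_and, and_imp] at hk hmin
  obtain ⟨hjk, hk⟩ := hk
  have hgap : ∀ i, j < i → i < k → q j < q i → q k < q i := fun i hji hik hqi =>
    (hmin i hji hqi).lt_of_ne (q.injective.ne hik.ne')
  exact ⟨q * swap j k, h.mul_swap_right hj hjk hk hmin, occupiedBefore_mul_swap_left hjk hk hmin,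
    invCount_mul_swap hjk hk hgap⟩

end Cover

theorem Reaches.exists_cover {x y : Perm (Fin n)} (h : Reaches ⇑x ⇑y) (hne : x ≠ y) :
    ∃ z : Perm (Fin n), Reaches ⇑x ⇑z ∧ Reaches ⇑z ⇑y ∧ invCount ⇑z = invCount ⇑y + 1 := by
  rw [reaches_iff_occupiedBefore] at h
  obtain ⟨r, hxr, hry, hr⟩ := h.exists_cover (revConj_involutive.injective.ne hne)
  refine ⟨revConj r, ?_, ?_, ?_⟩
  · rwa [reaches_iff_occupiedBefore, revConj_involutive r]
  · rwa [reaches_iff_occupiedBefore, revConj_involutive r]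
  · simpa [invCount_pconj] using hr

end Parking

/-- Prop. `reachable-graded`. If `x ⊵_R y` and `m = ℓ(x) - ℓ(y)`,
then there is a chain `y = x₀, x₁, …, x_m = x` with `x_k ⊵_R x_{k-1}` and
`ℓ(x_k) = ℓ(y) + k` for all `k ∈ [m]`. -/
theorem stmt11 {n : ℕ} (x y : Equiv.Perm (Fin n)) (h : Reaches ⇑x ⇑y) :
    ∃ f : ℕ → Equiv.Perm (Fin n), f 0 = y ∧ f (invCount ⇑x - invCount ⇑y) = x ∧
      ∀ k, 1 ≤ k → k ≤ invCount ⇑x - invCount ⇑y →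
        Reaches ⇑(f k) ⇑(f (k - 1)) ∧ invCount ⇑(f k) = invCount ⇑y + k :=
  (Parking.exists_graded_chain (R := fun u v : Equiv.Perm (Fin n) => Reaches ⇑u ⇑v)
    (fun u => invCount ⇑u) (fun u => Parking.invCount_le ⇑u)
    (fun _ _ => Parking.Reaches.exists_cover) h).2
end
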